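/- Uniqueness of the diagonal term: if A A^H + D₁ = B B^H + D₂ with A, B ∈ ℂ^{M×p}, D₁, D₂ diagonal, and every principal p×p submatrix condition holds in the sense that all off-diagonal entries determine the low-rank part, then under the assumption that A A^H and B B^H agree off the diagonal and both have rank p with no zero rows and M ≥ 2p+1 and generic A, it follows that D₁ = D₂ and A A^H = B B^H. -/

import Mathlib

/-!
Let `a` be the `i`-th row of `A`, and `X`, `Y` the rows of `A` indexed by two disjoint `p`-sets
avoiding `i` (they exist since `M ≥ 2p + 1`). Then `a aᴴ = (Y aᴴ)ᴴ (X Yᴴ)⁻¹ (X aᴴ)`, and `X aᴴ`,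
`Y aᴴ`, `X Yᴴ` consist of off-diagonal entries of `A Aᴴ` only. Genericity of `A` makes `X Yᴴ`
invertible, so the same off-diagonal entries of `B Bᴴ` force the same formula for `B`, hence the
same diagonal entry.
-/

open Matrix

theorem Function.Embedding.exists_pair_disjoint_avoiding {n m : Type*} [Fintype n] [Fintype m]
    (i : m) (h : 2 * Fintype.card n + 1 ≤ Fintype.card m) :
    ∃ s t : n ↪ m, (∀ k, s k ≠ i) ∧ (∀ k, t k ≠ i) ∧ ∀ k l, s k ≠ t l := by
  classical
  have hcard : Fintype.card (n ⊕ n) ≤ Fintype.card {j // j ≠ i} := by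
    rw [Fintype.card_sum, Fintype.card_subtype_compl, Fintype.card_subtype_eq]
    omega
  obtain ⟨e⟩ := Function.Embedding.nonempty_of_card_le hcard
  let f : n ⊕ n ↪ m := e.trans (Function.Embedding.subtype _)
  exact ⟨Function.Embedding.inl.trans f, Function.Embedding.inr.trans f, fun k => (e _).2,
    fun k => (e _).2, fun k l hkl => Sum.inl_ne_inr (f.injective hkl)⟩

section

variable {m n K : Type*} [Fintype n] [Field K]

theorem Matrix.isUnit_submatrix_of_linearIndependent [DecidableEq n] {A : Matrix m n K}
    (s : n ↪ m) (h : LinearIndependent K (fun i : Finset.univ.map s => A i)) :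
    IsUnit (A.submatrix s id) := by
  rw [← linearIndependent_rows_iff_isUnit]
  exact h.comp (fun k => ⟨s k, Finset.mem_map_of_mem s (Finset.mem_univ k)⟩)
    fun k l hkl => s.injective (congrArg Subtype.val hkl)

variable [StarRing K]

theorem Matrix.mul_conjTranspose_submatrix (A : Matrix m n K) (s t : n → m) :
    (A * Aᴴ).submatrix s t = A.submatrix s id * (A.submatrix t id)ᴴ := by
  rw [conjTranspose_submatrix, ← submatrix_mul _ _ _ _ _ Function.bijective_id]

variable [DecidableEq n]

theorem Matrix.star_mulVec_dotProduct_inv_mul_conjTranspose_mulVec {X Y : Matrix n n K}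
    (h : IsUnit (X * Yᴴ)) (a : n → K) :
    star (Y *ᵥ a) ⬝ᵥ ((X * Yᴴ)⁻¹ *ᵥ (X *ᵥ a)) = star a ⬝ᵥ a := by
  rw [isUnit_iff_isUnit_det, det_mul] at h
  obtain ⟨hX, hY⟩ := IsUnit.mul_iff.1 h
  rw [star_mulVec, ← dotProduct_mulVec, mulVec_mulVec, mulVec_mulVec, mul_inv_rev,
    mul_nonsing_inv_cancel_left (h := hY), nonsing_inv_mul _ hX, one_mulVec]

theorem Matrix.mul_conjTranspose_apply_self_eq (A : Matrix m n K) (s t : n → m)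
    (h : IsUnit ((A * Aᴴ).submatrix s t)) (i : m) :
    (A * Aᴴ) i i = star (fun k => (A * Aᴴ) (t k) i) ⬝ᵥ
      (((A * Aᴴ).submatrix s t)⁻¹ *ᵥ fun k => (A * Aᴴ) (s k) i) := by
  have hcol : ∀ u : n → m, (fun k => (A * Aᴴ) (u k) i) = A.submatrix u id *ᵥ star (A i) := by
    intro u; ext k; simp [mul_apply, mulVec, dotProduct]
  rw [hcol, hcol, mul_conjTranspose_submatrix,
    star_mulVec_dotProduct_inv_mul_conjTranspose_mulVec (mul_conjTranspose_submatrix A s t ▸ h)]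
  simp [mul_apply, dotProduct]

theorem Matrix.mul_conjTranspose_apply_self_eq_of_offDiag (A B : Matrix m n K) (s t : n → m)
    (hs : IsUnit (A.submatrix s id)) (ht : IsUnit (A.submatrix t id)) (i : m)
    (hsi : ∀ k, s k ≠ i) (hti : ∀ k, t k ≠ i) (hst : ∀ k l, s k ≠ t l)
    (hoff : ∀ j l, j ≠ l → (A * Aᴴ) j l = (B * Bᴴ) j l) :
    (A * Aᴴ) i i = (B * Bᴴ) i i := by
  have hsub : (A * Aᴴ).submatrix s t = (B * Bᴴ).submatrix s t :=
    Matrix.ext fun k l => hoff _ _ (hst k l)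
  have hunit : IsUnit ((A * Aᴴ).submatrix s t) := by
    rw [mul_conjTranspose_submatrix]
    exact hs.mul ((isUnit_conjTranspose _).2 ht)
  rw [mul_conjTranspose_apply_self_eq A s t hunit, mul_conjTranspose_apply_self_eq B s t
    (hsub ▸ hunit), hsub]
  simp only [fun k => hoff _ i (hsi k), fun k => hoff _ i (hti k)]

end

theorem factor_analysis_diagonal_uniqueness_general
    (M p : ℕ) (hM : 2 * p + 1 ≤ M)
    (A B : Matrix (Fin M) (Fin p) ℂ)
    (hgen : ∀ s : Finset (Fin M), s.card = p →
      LinearIndependent ℂ (fun i : s => A i))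
    (hoff : ∀ i j : Fin M, i ≠ j → (A * Aᴴ) i j = (B * Bᴴ) i j) :
    A * Aᴴ = B * Bᴴ ∧
    ∀ d₁ d₂ : Fin M → ℂ,
      A * Aᴴ + Matrix.diagonal d₁ = B * Bᴴ + Matrix.diagonal d₂ → d₁ = d₂ := by
  have hunit (s : Fin p ↪ Fin M) : IsUnit (A.submatrix s id) :=
    isUnit_submatrix_of_linearIndependent s (hgen _ (by simp))
  have hGram : A * Aᴴ = B * Bᴴ := by
    ext i j
    rcases eq_or_ne i j with rfl | hij
    · obtain ⟨s, t, hsi, hti, hst⟩ :=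
        Function.Embedding.exists_pair_disjoint_avoiding (n := Fin p) i (by simpa using hM)
      exact mul_conjTranspose_apply_self_eq_of_offDiag A B s t (hunit s) (hunit t) i hsi hti hst
        hoff
    · exact hoff i j hij
  refine ⟨hGram, fun d₁ d₂ h => diagonal_injective ?_⟩
  rw [hGram] at h
  exact add_left_cancel h

/-- Uniqueness of the diagonal term in factor analysis: if `G = A Aᴴ` and `H = B Bᴴ` are
rank-`p` PSD matrices agreeing on all off-diagonal entries, every `p` rows of `A` are linearly
independent, and `M ≥ 2p + 1`, then `G = H`; consequently any diagonal completions agree. -/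
theorem factor_analysis_diagonal_uniqueness
    (M p : ℕ) (hM : 2 * p + 1 ≤ M)
    (A B : Matrix (Fin M) (Fin p) ℂ) (hA : A.rank = p) (hB : B.rank = p)
    (hgen : ∀ s : Finset (Fin M), s.card = p →
      LinearIndependent ℂ (fun i : s => A i))
    (hoff : ∀ i j : Fin M, i ≠ j → (A * Aᴴ) i j = (B * Bᴴ) i j) :
    A * Aᴴ = B * Bᴴ ∧
    ∀ d₁ d₂ : Fin M → ℂ,
      A * Aᴴ + Matrix.diagonal d₁ = B * Bᴴ + Matrix.diagonal d₂ → d₁ = d₂ :=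
  factor_analysis_diagonal_uniqueness_general M p hM A B hgen hoff
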